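/- arXiv:0807.2563 — 3 statements merged into one kernel-verified Lean document; each statement's English description precedes it below -/
import Mathlib

section
/- Let n1, n2 be positive integers, x_{ij} ∈ ℝ for j = 1,…,n_i, i = 1,2, let h : ℝ → ℝ^d be a function, set ρ1 = n1/n2 and w_{ij}(θ) = exp(α + β·h(x_{ij})) for θ = (α, β) ∈ ℝ × ℝ^d, and define l(θ) = −Σ_{i=1}^{2} Σ_{j=1}^{n_i} log(1 + ρ1 w_{ij}(θ)) + Σ_{j=1}^{n_1} (α + β·h(x_{1j})). For q > 1 and λ > 0, define the penalized empirical log-likelihood l_p(θ) = l(θ) − λ Σ_{k=1}^{d} |β_k|^q. Then l_p attains its supremum: there exists θ̂ ∈ ℝ × ℝ^d with l_p(θ̂) = sup_{θ} l_p(θ). -/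
/-!
Both terms of `l` behave like softplus functions of the scores `s = α + β·h(x)`: for `ρ > 0`,
`0 ≤ log (1 + ρ eˢ)` and `log ρ + s ≤ log (1 + ρ eˢ)`. Keeping a single observation of each
sample bounds `l(θ)` by `C + min (s₁, -s₂)`, hence by `C - |α| + Σₖ Kₖ |βₖ|`. Since `q > 1` the
penalty `λ Σₖ |βₖ|^q` absorbs the linear term in `β` with room to spare, so
`l_p(θ) ≤ C' - ‖θ‖`, and a continuous function on `ℝ × ℝᵈ` that tends to `-∞` at infinity
attains its maximum.
-/

/-- The profile empirical log-likelihood of the density ratio model: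
`l(θ) = −Σ_{i,j} log(1 + ρ1 exp(α + β·h(x_{ij}))) + Σ_{j=1}^{n1} (α + β·h(x_{1j}))`
with `ρ1 = n1/n2`, for `θ = (α, β) ∈ ℝ × ℝ^d`. -/
noncomputable def ell {n1 n2 d : ℕ} (x1 : Fin n1 → ℝ) (x2 : Fin n2 → ℝ)
    (h : ℝ → Fin d → ℝ) (θ : ℝ × (Fin d → ℝ)) : ℝ :=
  (- ∑ j, Real.log (1 + ((n1 : ℝ) / (n2 : ℝ)) *
        Real.exp (θ.1 + ∑ k, θ.2 k * h (x1 j) k))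
   - ∑ j, Real.log (1 + ((n1 : ℝ) / (n2 : ℝ)) *
        Real.exp (θ.1 + ∑ k, θ.2 k * h (x2 j) k)))
  + ∑ j, (θ.1 + ∑ k, θ.2 k * h (x1 j) k)

open Filter Real Finset

theorem Continuous.exists_forall_ge_of_le_const_sub_norm {E : Type*} [NormedAddCommGroup E]
    [ProperSpace E] {f : E → ℝ} (hf : Continuous f) (C : ℝ) (hle : ∀ x, f x ≤ C - ‖x‖) :
    ∃ x, ∀ y, f y ≤ f x :=
  hf.exists_forall_ge <| tendsto_atBot_mono hle <|
    tendsto_atBot_add_const_left _ C (tendsto_neg_atTop_atBot.comp tendsto_norm_cocompact_atTop)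

theorem exists_mul_le_mul_rpow_add {q : ℝ} (hq : 1 < q) (c : ℝ) {lam : ℝ} (hlam : 0 < lam) :
    ∃ C, ∀ t, 0 ≤ t → c * t ≤ lam * t ^ q + C := by
  obtain ⟨T, hT⟩ := eventually_atTop.1 <|
    (tendsto_rpow_atTop (sub_pos.2 hq)).eventually_ge_atTop (|c| / lam)
  refine ⟨|c| * max T 0, fun t ht => ?_⟩
  rcases le_total t (max T 0) with htT | hTt
  · have : 0 ≤ lam * t ^ q := by positivity
    nlinarith [le_abs_self c, abs_nonneg c]
  · -- `λ t^q = t · λ t^(q-1) ≥ t |c|` once `t ≥ T`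
    have hpow : t ^ q = t * t ^ (q - 1) := by
      rw [← rpow_one_add' ht (by linarith)]; ring_nf
    have : |c| ≤ lam * t ^ (q - 1) := by
      rw [← div_le_iff₀' hlam]; exact hT t (le_of_max_le_left hTt)
    have : 0 ≤ |c| * max T 0 := by positivity
    nlinarith [le_abs_self c]

theorem norm_prod_pi_le_abs_add_sum_abs {ι : Type*} [Fintype ι] (θ : ℝ × (ι → ℝ)) :
    ‖θ‖ ≤ |θ.1| + ∑ k, |θ.2 k| := by
  have hsum : 0 ≤ ∑ k, |θ.2 k| := by positivity
  have hβ : ‖θ.2‖ ≤ ∑ k, |θ.2 k| := (pi_norm_le_iff_of_nonneg hsum).2 fun k =>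
    single_le_sum (f := fun k => |θ.2 k|) (fun _ _ => abs_nonneg _) (mem_univ k)
  rw [Prod.norm_def, Real.norm_eq_abs]
  exact max_le (le_add_of_nonneg_right hsum) (hβ.trans (le_add_of_nonneg_left (abs_nonneg _)))

theorem log_one_add_mul_exp_nonneg {ρ : ℝ} (hρ : 0 ≤ ρ) (s : ℝ) : 0 ≤ log (1 + ρ * exp s) :=
  log_nonneg (by have := exp_pos s; nlinarith)

theorem log_add_le_log_one_add_mul_exp {ρ : ℝ} (hρ : 0 < ρ) (s : ℝ) :
    log ρ + s ≤ log (1 + ρ * exp s) := by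
  rw [← log_exp s, ← log_mul hρ.ne' (exp_pos _).ne', log_exp]
  exact log_le_log (by positivity) (by linarith)

theorem Finset.sum_le_add_card_sub_one_mul {ι : Type*} [Fintype ι] {f : ι → ℝ} {c : ℝ}
    (hf : ∀ i, f i ≤ c) (i₀ : ι) : ∑ i, f i ≤ f i₀ + (Fintype.card ι - 1) * c := by
  have := single_le_sum (f := fun i => c - f i) (fun i _ => sub_nonneg.2 (hf i)) (mem_univ i₀)
  rw [sum_sub_distrib, sum_const, card_univ, nsmul_eq_mul] at this
  linarith

def logDensityRatio {d : ℕ} (h : ℝ → Fin d → ℝ) (θ : ℝ × (Fin d → ℝ)) (x : ℝ) : ℝ :=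
  θ.1 + ∑ k, θ.2 k * h x k

theorem abs_logDensityRatio_sub_le {d : ℕ} (h : ℝ → Fin d → ℝ) (θ : ℝ × (Fin d → ℝ)) (x : ℝ) :
    |logDensityRatio h θ x - θ.1| ≤ ∑ k, |h x k| * |θ.2 k| := by
  rw [logDensityRatio, add_sub_cancel_left]
  refine (abs_sum_le_sum_abs _ _).trans_eq (sum_congr rfl fun k _ => ?_)
  rw [abs_mul, mul_comm]

section

variable {n1 n2 d : ℕ} (x1 : Fin n1 → ℝ) (x2 : Fin n2 → ℝ) (h : ℝ → Fin d → ℝ)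
  (θ : ℝ × (Fin d → ℝ))

theorem continuous_ell : Continuous (ell x1 x2 h) := by
  unfold ell
  fun_prop (disch := intro; positivity)

theorem ell_eq_sum_sub_sum :
    ell x1 x2 h θ =
      ∑ j, (logDensityRatio h θ (x1 j) -
        log (1 + (n1 / n2 : ℝ) * exp (logDensityRatio h θ (x1 j)))) -
      ∑ j, log (1 + (n1 / n2 : ℝ) * exp (logDensityRatio h θ (x2 j))) := by
  rw [ell, sum_sub_distrib]
  simp only [logDensityRatio]
  ring

theorem ell_le_logDensityRatio_add (hn2 : 0 < n2) (j : Fin n1) :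
    ell x1 x2 h θ ≤ logDensityRatio h θ (x1 j) + (n1 - 1) * -log (n1 / n2 : ℝ) := by
  have hρ : (0 : ℝ) < n1 / n2 := by have := j.pos; positivity
  have hsum := Finset.sum_le_add_card_sub_one_mul
    (f := fun i => logDensityRatio h θ (x1 i) -
      log (1 + (n1 / n2 : ℝ) * exp (logDensityRatio h θ (x1 i)))) (c := -log (n1 / n2 : ℝ))
    (fun i => by linarith [log_add_le_log_one_add_mul_exp hρ (logDensityRatio h θ (x1 i))]) j
  have hx2 : 0 ≤ ∑ j, log (1 + (n1 / n2 : ℝ) * exp (logDensityRatio h θ (x2 j))) :=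
    sum_nonneg fun j _ => log_one_add_mul_exp_nonneg hρ.le _
  have hx1 := log_one_add_mul_exp_nonneg hρ.le (logDensityRatio h θ (x1 j))
  rw [Fintype.card_fin] at hsum
  rw [ell_eq_sum_sub_sum]
  linarith

theorem ell_le_neg_logDensityRatio_add (hn1 : 0 < n1) (j : Fin n2) :
    ell x1 x2 h θ ≤ -logDensityRatio h θ (x2 j) + (n1 + 1) * -log (n1 / n2 : ℝ) := by
  have hρ : (0 : ℝ) < n1 / n2 := by have := j.pos; positivity
  have hx1 : ∑ j, (logDensityRatio h θ (x1 j) -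
      log (1 + (n1 / n2 : ℝ) * exp (logDensityRatio h θ (x1 j)))) ≤ n1 * -log (n1 / n2 : ℝ) := by
    refine (sum_le_sum (g := fun _ => -log (n1 / n2 : ℝ)) fun i _ => ?_).trans_eq (by simp)
    linarith [log_add_le_log_one_add_mul_exp hρ (logDensityRatio h θ (x1 i))]
  have hx2 := single_le_sum
    (f := fun j => log (1 + (n1 / n2 : ℝ) * exp (logDensityRatio h θ (x2 j))))
    (fun j _ => log_one_add_mul_exp_nonneg hρ.le _) (mem_univ j)
  have := log_add_le_log_one_add_mul_exp hρ (logDensityRatio h θ (x2 j))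
  rw [ell_eq_sum_sub_sum]
  linarith

theorem ell_le_const_sub_abs_add (j1 : Fin n1) (j2 : Fin n2) :
    ell x1 x2 h θ ≤ (n1 + 1) * |log (n1 / n2 : ℝ)| - |θ.1| +
      ∑ k, (|h (x1 j1) k| + |h (x2 j2) k|) * |θ.2 k| := by
  have h1 := ell_le_logDensityRatio_add x1 x2 h θ j2.pos j1
  have h2 := ell_le_neg_logDensityRatio_add x1 x2 h θ j1.pos j2
  have r1 := (abs_le.1 (abs_logDensityRatio_sub_le h θ (x1 j1))).2
  have r2 := (abs_le.1 (abs_logDensityRatio_sub_le h θ (x2 j2))).1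
  have hn1 : (1 : ℝ) ≤ n1 := by exact_mod_cast j1.pos
  have hL := neg_le_abs (log (n1 / n2 : ℝ))
  have hc₁ : (n1 - 1) * -log (n1 / n2 : ℝ) ≤ (n1 + 1) * |log (n1 / n2 : ℝ)| := by
    nlinarith [abs_nonneg (log (n1 / n2 : ℝ))]
  have hc₂ : (n1 + 1) * -log (n1 / n2 : ℝ) ≤ (n1 + 1) * |log (n1 / n2 : ℝ)| := by gcongr
  have hA : 0 ≤ ∑ k, |h (x1 j1) k| * |θ.2 k| := by positivity
  have hB : 0 ≤ ∑ k, |h (x2 j2) k| * |θ.2 k| := by positivity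
  simp only [add_mul, sum_add_distrib]
  rcases abs_cases θ.1 with ⟨hα, _⟩ | ⟨hα, _⟩ <;> rw [hα] <;> linarith

end

/-- For `q > 1` and regularization parameter `λ > 0`, the
penalized empirical log-likelihood `l_p(θ) = l(θ) − λ Σ_k |β_k|^q` attains
its supremum over `ℝ × ℝ^d`. -/
theorem penalized_likelihood_attains_sup {n1 n2 d : ℕ}
    (hn1 : 0 < n1) (hn2 : 0 < n2)
    (x1 : Fin n1 → ℝ) (x2 : Fin n2 → ℝ) (h : ℝ → Fin d → ℝ)
    (q lam : ℝ) (hq : 1 < q) (hlam : 0 < lam) :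
    ∃ θhat : ℝ × (Fin d → ℝ),
      ∀ θ : ℝ × (Fin d → ℝ),
        ell x1 x2 h θ - lam * ∑ k, |θ.2 k| ^ q
          ≤ ell x1 x2 h θhat - lam * ∑ k, |θhat.2 k| ^ q := by
  let j1 : Fin n1 := ⟨0, hn1⟩
  let j2 : Fin n2 := ⟨0, hn2⟩
  let K k := |h (x1 j1) k| + |h (x2 j2) k|
  choose C hC using fun k => exists_mul_le_mul_rpow_add hq (K k + 1) hlam
  have hcont : Continuous fun θ : ℝ × (Fin d → ℝ) => ell x1 x2 h θ - lam * ∑ k, |θ.2 k| ^ q := by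
    have := continuous_ell x1 x2 h
    have hq0 : 0 ≤ q := by linarith
    fun_prop (disch := assumption)
  refine hcont.exists_forall_ge_of_le_const_sub_norm
    ((n1 + 1) * |log (n1 / n2 : ℝ)| + ∑ k, C k) fun θ => ?_
  have hpen : ∑ k, (K k + 1) * |θ.2 k| ≤ lam * ∑ k, |θ.2 k| ^ q + ∑ k, C k := by
    rw [mul_sum, ← sum_add_distrib]
    exact sum_le_sum fun k _ => hC k _ (abs_nonneg _)
  have hell := ell_le_const_sub_abs_add x1 x2 h θ j1 j2
  have hnorm := norm_prod_pi_le_abs_add_sum_abs θ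
  simp only [add_one_mul, sum_add_distrib] at hpen
  linarith
end

section
/- Let μ be a σ-finite measure on ℝ, g2 a probability density with respect to μ, h : ℝ → ℝ^d measurable, α0 ∈ ℝ, β0 ∈ ℝ^d, and set w(x) = exp(α0 + β0·h(x)). Suppose g1 = w · g2 is also a probability density with respect to μ, and let n1, n2 be positive integers with ρ1 = n1/n2. Then: (a) ∫ (ρ1 w(x)/(1 + ρ1 w(x))) (n1 g1(x) + n2 g2(x)) dμ(x) = n1; and (b) if ∫ ‖h(x)‖ g1(x) dμ(x) < ∞, then ∫ h(x) (ρ1 w(x)/(1 + ρ1 w(x))) (n1 g1(x) + n2 g2(x)) dμ(x) = n1 ∫ h(x) g1(x) dμ(x), with the integrand in (b) μ-integrable. Equivalently, when X_{11},…,X_{1n_1} are i.i.d. with density g1 and X_{21},…,X_{2n_2} are i.i.d. with density g2, the score ∇l(θ0) of the empirical log-likelihood at the true parameter θ0 = (α0, β0) has expectation zero. -/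
/-!
At the true parameter `n₁ g₁ + n₂ g₂ = n₂ g₂ (1 + ρ₁w)`, so the integrand collapses pointwise:
`ρ₁w/(1 + ρ₁w) · (n₁ g₁ + n₂ g₂) = n₂ ρ₁ w g₂ = n₁ g₁`. Both integrals therefore reduce to `n₁`
times an integral against the density `g₁`.
-/

open MeasureTheory

theorem odds_weight_mul_mixture {a b w g : ℝ} (hb : b ≠ 0) (hw : b + a * w ≠ 0) :
    a / b * w / (1 + a / b * w) * (a * (w * g) + b * g) = a * (w * g) := by
  field_simp
  ring

theorem MeasureTheory.Integrable.smul_of_norm_mul {α E : Type*} [MeasurableSpace α]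
    [NormedAddCommGroup E] [NormedSpace ℝ E] {μ : Measure α} {f : α → ℝ} {h : α → E}
    (hf : AEStronglyMeasurable f μ) (hh : AEStronglyMeasurable h μ) (hf_nonneg : ∀ x, 0 ≤ f x)
    (hint : Integrable (fun x => ‖h x‖ * f x) μ) :
    Integrable (fun x => f x • h x) μ := by
  refine (integrable_norm_iff (hf.smul hh)).1 (hint.congr (Filter.Eventually.of_forall fun x => ?_))
  show ‖h x‖ * f x = ‖f x • h x‖
  rw [norm_smul, Real.norm_of_nonneg (hf_nonneg x), mul_comm]

theorem score_mean_zero_general {d : ℕ} (μ : Measure ℝ)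
    (g2 : ℝ → ℝ)
    (hg2nn : ∀ x, 0 ≤ g2 x)
    (h : ℝ → Fin d → ℝ) (hh : Measurable h)
    (α0 : ℝ) (β0 : Fin d → ℝ)
    (g1 : ℝ → ℝ)
    (hg1 : ∀ x, g1 x = Real.exp (α0 + ∑ k, β0 k * h x k) * g2 x)
    (hg1int : ∫ x, g1 x ∂μ = 1)
    (n1 n2 : ℕ) (hn2 : 0 < n2) :
    (∫ x, ((n1 : ℝ) / (n2 : ℝ) * Real.exp (α0 + ∑ k, β0 k * h x k) /
        (1 + (n1 : ℝ) / (n2 : ℝ) * Real.exp (α0 + ∑ k, β0 k * h x k))) *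
        ((n1 : ℝ) * g1 x + (n2 : ℝ) * g2 x) ∂μ = (n1 : ℝ)) ∧
    (Integrable (fun x => ‖h x‖ * g1 x) μ →
      Integrable (fun x =>
        (((n1 : ℝ) / (n2 : ℝ) * Real.exp (α0 + ∑ k, β0 k * h x k) /
          (1 + (n1 : ℝ) / (n2 : ℝ) * Real.exp (α0 + ∑ k, β0 k * h x k))) *
          ((n1 : ℝ) * g1 x + (n2 : ℝ) * g2 x)) • h x) μ ∧
      ∫ x, (((n1 : ℝ) / (n2 : ℝ) * Real.exp (α0 + ∑ k, β0 k * h x k) /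
          (1 + (n1 : ℝ) / (n2 : ℝ) * Real.exp (α0 + ∑ k, β0 k * h x k))) *
          ((n1 : ℝ) * g1 x + (n2 : ℝ) * g2 x)) • h x ∂μ
        = (n1 : ℝ) • ∫ x, g1 x • h x ∂μ) := by
  have pointwise : ∀ x, (n1 : ℝ) / n2 * Real.exp (α0 + ∑ k, β0 k * h x k) /
      (1 + (n1 : ℝ) / n2 * Real.exp (α0 + ∑ k, β0 k * h x k)) *
      ((n1 : ℝ) * g1 x + n2 * g2 x) = n1 * g1 x := fun x => by
    rw [hg1 x]
    exact odds_weight_mul_mixture (Nat.cast_ne_zero.mpr hn2.ne') (by positivity)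
  have g1_integrable : Integrable g1 μ := Integrable.of_integral_ne_zero (by simp [hg1int])
  have g1_nonneg : ∀ x, 0 ≤ g1 x := fun x => by
    rw [hg1 x]
    exact mul_nonneg (Real.exp_pos _).le (hg2nn x)
  simp_rw [pointwise, ← smul_smul]
  refine ⟨by rw [integral_const_mul, hg1int, mul_one], fun hint => ?_⟩
  have g1_smul_integrable : Integrable (fun x => g1 x • h x) μ :=
    Integrable.smul_of_norm_mul g1_integrable.aestronglyMeasurable hh.aestronglyMeasurable
      g1_nonneg hint
  exact ⟨g1_smul_integrable.fun_smul _, integral_smul _ _⟩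

/-- Unbiasedness of the score at the true parameter in the
density ratio model `g1 = exp(α0 + β0·h) g2`.  With `w(x) = exp(α0 + β0·h(x))`
and `ρ1 = n1/n2`:
(a) `∫ (ρ1 w/(1 + ρ1 w)) (n1 g1 + n2 g2) dμ = n1`, and
(b) if `∫ ‖h‖ g1 dμ < ∞` then the `h`-weighted version is integrable and
`∫ (ρ1 w/(1 + ρ1 w)) (n1 g1 + n2 g2) h dμ = n1 ∫ h g1 dμ`.
Equivalently, the score `∇l(θ0)` has expectation zero. -/
theorem score_mean_zero {d : ℕ} (μ : Measure ℝ) [SigmaFinite μ]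
    (g2 : ℝ → ℝ) (hg2meas : Measurable g2)
    (hg2nn : ∀ x, 0 ≤ g2 x) (hg2int : ∫ x, g2 x ∂μ = 1)
    (h : ℝ → Fin d → ℝ) (hh : Measurable h)
    (α0 : ℝ) (β0 : Fin d → ℝ)
    (g1 : ℝ → ℝ)
    (hg1 : ∀ x, g1 x = Real.exp (α0 + ∑ k, β0 k * h x k) * g2 x)
    (hg1int : ∫ x, g1 x ∂μ = 1)
    (n1 n2 : ℕ) (hn1 : 0 < n1) (hn2 : 0 < n2) :
    (∫ x, ((n1 : ℝ) / (n2 : ℝ) * Real.exp (α0 + ∑ k, β0 k * h x k) /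
        (1 + (n1 : ℝ) / (n2 : ℝ) * Real.exp (α0 + ∑ k, β0 k * h x k))) *
        ((n1 : ℝ) * g1 x + (n2 : ℝ) * g2 x) ∂μ = (n1 : ℝ)) ∧
    (Integrable (fun x => ‖h x‖ * g1 x) μ →
      Integrable (fun x =>
        (((n1 : ℝ) / (n2 : ℝ) * Real.exp (α0 + ∑ k, β0 k * h x k) /
          (1 + (n1 : ℝ) / (n2 : ℝ) * Real.exp (α0 + ∑ k, β0 k * h x k))) *
          ((n1 : ℝ) * g1 x + (n2 : ℝ) * g2 x)) • h x) μ ∧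
      ∫ x, (((n1 : ℝ) / (n2 : ℝ) * Real.exp (α0 + ∑ k, β0 k * h x k) /
          (1 + (n1 : ℝ) / (n2 : ℝ) * Real.exp (α0 + ∑ k, β0 k * h x k))) *
          ((n1 : ℝ) * g1 x + (n2 : ℝ) * g2 x)) • h x ∂μ
        = (n1 : ℝ) • ∫ x, g1 x • h x ∂μ) :=
  score_mean_zero_general μ g2 hg2nn h hh α0 β0 g1 hg1 hg1int n1 n2 hn2
end

section
/- Let n1, n2 be positive integers, x_{ij} ∈ ℝ for j = 1,…,n_i, i = 1,2, let h : ℝ → ℝ^d be a function, set ρ1 = n1/n2 and w_{ij}(θ) = exp(α + β·h(x_{ij})) for θ = (α, β) ∈ ℝ × ℝ^d, and define l(θ) = −Σ_{i=1}^{2} Σ_{j=1}^{n_i} log(1 + ρ1 w_{ij}(θ)) + Σ_{j=1}^{n_1} (α + β·h(x_{1j})). Fix q > 1, and for each λ > 0 let θ̂^λ = (α̂^λ, β̂^λ) be any global maximizer of l_p(θ) = l(θ) − λ Σ_{k=1}^{d} |β_k|^q. Then β̂^λ → 0 as λ → ∞; in fact Σ_{k=1}^{d} |β̂^λ_k|^q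 ≤ C/λ for the finite constant C = −n1 log ρ1 − sup_{α ∈ ℝ} l((α, 0)). That is, as the regularization parameter tends to infinity, the penalized estimator of β shrinks towards 0. -/
/-! Comparing the maximizer `θ̂^λ` with the points `(α, 0)`, where the penalty vanishes, and using
the global bound `l ≤ −n1 log ρ1` gives `λ Σ_k |β̂^λ_k|^q ≤ C`. Each `|β̂^λ_k|^q` is then at most
`C/λ`, so every coordinate of `β̂^λ` tends to `0`. -/

open Filter Topology

lemma sub_log_one_add_mul_exp_le {ρ : ℝ} (hρ : 0 < ρ) (y : ℝ) :
    y - Real.log (1 + ρ * Real.exp y) ≤ -Real.log ρ := by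
  have hlog : Real.log (ρ * Real.exp y) = Real.log ρ + y := by
    rw [Real.log_mul hρ.ne' (Real.exp_pos y).ne', Real.log_exp]
  have hmono : Real.log (ρ * Real.exp y) ≤ Real.log (1 + ρ * Real.exp y) :=
    Real.log_le_log (by positivity) (by linarith)
  linarith

lemma log_one_add_mul_exp_nonneg_s13 {ρ : ℝ} (hρ : 0 ≤ ρ) (y : ℝ) :
    0 ≤ Real.log (1 + ρ * Real.exp y) :=
  Real.log_nonneg (by nlinarith [Real.exp_pos y])

/-- The upper bound `l ≤ −n1 log ρ1`: each summand over the first sample contributes at most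
`−log ρ1`, each one over the second sample is nonpositive. -/
lemma ell_le_neg_mul_log {n1 n2 d : ℕ} (hn1 : 0 < n1) (hn2 : 0 < n2)
    (x1 : Fin n1 → ℝ) (x2 : Fin n2 → ℝ) (h : ℝ → Fin d → ℝ) (θ : ℝ × (Fin d → ℝ)) :
    ell x1 x2 h θ ≤ -(n1 : ℝ) * Real.log ((n1 : ℝ) / (n2 : ℝ)) := by
  have hρ : 0 < (n1 : ℝ) / (n2 : ℝ) := by positivity
  have hfirst := Finset.sum_le_sum fun j (_ : j ∈ Finset.univ) =>
    sub_log_one_add_mul_exp_le hρ (θ.1 + ∑ k, θ.2 k * h (x1 j) k)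
  have hsecond := Finset.sum_nonneg fun j (_ : j ∈ Finset.univ) =>
    log_one_add_mul_exp_nonneg_s13 hρ.le (θ.1 + ∑ k, θ.2 k * h (x2 j) k)
  simp only [Finset.sum_sub_distrib, Finset.sum_const, Finset.card_univ, Fintype.card_fin,
    nsmul_eq_mul] at hfirst
  unfold ell
  linarith

lemma mul_penalty_le_sub_sSup_of_maximizer {Θ ι : Type*} [Nonempty ι] {l J : Θ → ℝ}
    {M lam : ℝ} {θ₀ : Θ} (hl : ∀ θ, l θ ≤ M) (e : ι → Θ) (he : ∀ a, J (e a) = 0)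
    (hmax : ∀ θ, l θ - lam * J θ ≤ l θ₀ - lam * J θ₀) :
    lam * J θ₀ ≤ M - sSup (Set.range fun a => l (e a)) := by
  have hbound : sSup (Set.range fun a => l (e a)) ≤ M - lam * J θ₀ := by
    refine csSup_le (Set.range_nonempty _) ?_
    rintro _ ⟨a, rfl⟩
    have := hmax (e a)
    rw [he a, mul_zero, sub_zero] at this
    linarith [hl θ₀]
  linarith

lemma tendsto_zero_of_tendsto_abs_rpow {α : Type*} {l : Filter α} {u : α → ℝ} {q : ℝ}
    (hq : 0 < q) (hu : Tendsto (fun a => |u a| ^ q) l (𝓝 0)) : Tendsto u l (𝓝 0) := by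
  rw [tendsto_zero_iff_abs_tendsto_zero]
  have := hu.rpow_const (p := q⁻¹) (Or.inr (inv_nonneg.mpr hq.le))
  rw [Real.zero_rpow (inv_ne_zero hq.ne')] at this
  refine this.congr fun a => ?_
  exact Real.rpow_rpow_inv (abs_nonneg _) hq.ne'

lemma tendsto_zero_of_sum_abs_rpow_le_div {ι : Type*} [Fintype ι] {f : ℝ → ι → ℝ} {q C : ℝ}
    (hq : 0 < q) (hf : ∀ lam, 0 < lam → ∑ k, |f lam k| ^ q ≤ C / lam) :
    Tendsto f atTop (𝓝 0) := by
  rw [tendsto_pi_nhds]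
  intro k
  refine tendsto_zero_of_tendsto_abs_rpow hq ?_
  have hterm_le : ∀ lam, 0 < lam → |f lam k| ^ q ≤ C / lam := fun lam hlam =>
    (Finset.single_le_sum (fun i _ => Real.rpow_nonneg (abs_nonneg (f lam i)) q)
      (Finset.mem_univ k)).trans (hf lam hlam)
  refine tendsto_of_tendsto_of_tendsto_of_le_of_le' tendsto_const_nhds
    ((tendsto_const_nhds (x := C)).div_atTop tendsto_id) (Eventually.of_forall fun lam => ?_) ?_
  · exact Real.rpow_nonneg (abs_nonneg _) q
  · filter_upwards [eventually_gt_atTop 0] with lam hlam using hterm_le lam hlam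

/-- Shrinkage of the penalized estimator.  Fix `q > 1` and for
each `λ > 0` let `θ̂^λ` be any global maximizer of
`l_p(θ) = l(θ) − λ Σ_k |β_k|^q`.  Then `Σ_k |β̂^λ_k|^q ≤ C/λ` with
`C = −n1 log ρ1 − sup_α l((α, 0))`, and consequently `β̂^λ → 0` as
`λ → ∞`. -/
theorem penalized_estimator_shrinks {n1 n2 d : ℕ}
    (hn1 : 0 < n1) (hn2 : 0 < n2)
    (x1 : Fin n1 → ℝ) (x2 : Fin n2 → ℝ) (h : ℝ → Fin d → ℝ)
    (q : ℝ) (hq : 1 < q)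
    (θhat : ℝ → ℝ × (Fin d → ℝ))
    (hmax : ∀ lam : ℝ, 0 < lam → ∀ θ : ℝ × (Fin d → ℝ),
      ell x1 x2 h θ - lam * ∑ k, |θ.2 k| ^ q
        ≤ ell x1 x2 h (θhat lam) - lam * ∑ k, |(θhat lam).2 k| ^ q) :
    (∀ lam : ℝ, 0 < lam →
      ∑ k, |(θhat lam).2 k| ^ q ≤
        (-(n1 : ℝ) * Real.log ((n1 : ℝ) / (n2 : ℝ))
          - sSup (Set.range fun a : ℝ => ell x1 x2 h (a, 0))) / lam) ∧
    Filter.Tendsto (fun lam => (θhat lam).2) Filter.atTop (nhds 0) := by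
  have hq0 : 0 < q := by linarith
  have hbound : ∀ lam : ℝ, 0 < lam →
      ∑ k, |(θhat lam).2 k| ^ q ≤
        (-(n1 : ℝ) * Real.log ((n1 : ℝ) / (n2 : ℝ))
          - sSup (Set.range fun a : ℝ => ell x1 x2 h (a, 0))) / lam := by
    intro lam hlam
    rw [le_div_iff₀ hlam, mul_comm]
    refine mul_penalty_le_sub_sSup_of_maximizer (l := ell x1 x2 h) (J := fun θ => ∑ k, |θ.2 k| ^ q)
      (ell_le_neg_mul_log hn1 hn2 x1 x2 h) (fun a : ℝ => (a, 0)) (fun a => ?_) (hmax lam hlam)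
    simp [Real.zero_rpow hq0.ne']
  exact ⟨hbound, tendsto_zero_of_sum_abs_rpow_le_div hq0 hbound⟩
end
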